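/- arXiv:1704.08553 — 6 statements merged into one kernel-verified Lean document; each statement's English description precedes it below -/
import Mathlib

section
/- For every x > -1 and every λ ∈ (0,1), the inequality (1-λ)·((1+x)·log(1+x) - x) ≥ 1 + λ·x - (1+x)^λ holds. -/
/-!
With `y = 1 + x`, the inequality is a rearrangement of `y * (1 + (λ - 1) log y) ≤ y ^ λ`, which is
`exp t ≥ 1 + t` at `t = (λ - 1) log y`, multiplied by `y > 0`.
-/

open Real

lemma mul_one_add_sub_one_mul_log_le_rpow {y : ℝ} (hy : 0 < y) (p : ℝ) :
    y * (1 + (p - 1) * log y) ≤ y ^ p := by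
  have hexp : 1 + (p - 1) * log y ≤ y ^ (p - 1) := by
    rw [rpow_def_of_pos hy, add_comm, mul_comm]
    exact add_one_le_exp _
  calc y * (1 + (p - 1) * log y) ≤ y * y ^ (p - 1) := mul_le_mul_of_nonneg_left hexp hy.le
    _ = y ^ p := by rw [rpow_sub_one hy.ne', mul_div_cancel₀ _ hy.ne']

theorem lepingle_memin_ineq_general (x : ℝ) (hx : x > -1) (l : ℝ) :
    (1 - l) * ((1 + x) * Real.log (1 + x) - x) ≥ 1 + l * x - (1 + x) ^ l := by
  linear_combination mul_one_add_sub_one_mul_log_le_rpow (by linarith : (0 : ℝ) < 1 + x) l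

theorem lepingle_memin_ineq (x : ℝ) (hx : x > -1) (l : ℝ) (hl : l ∈ Set.Ioo (0 : ℝ) 1) :
    (1 - l) * ((1 + x) * Real.log (1 + x) - x) ≥ 1 + l * x - (1 + x) ^ l :=
  lepingle_memin_ineq_general x hx l
end

section
/- Let F be a finite nonnegative measure on ℝ, let g : ℝ → [0,∞) be measurable with ∫ g dF < ∞ and ∫ g·log(1+g) dF < ∞, and define h(y) = ∫ ((1+y·g(x))·log(1+y·g(x)) - y·g(x)) F(dx) for y ≥ 0. Then there exist constants γ₁, γ₂ ∈ (0,∞) such that h(y) ≤ γ₁·y·log(1+y) + γ₂ for all y ≥ 0. -/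
/-!
Pointwise, `(1 + t) log (1 + t) - t ≤ t log (1 + t)` because `log (1 + t) ≤ t`, and
`log (1 + y t) ≤ log (1 + y) + log (1 + t)` because `1 + y t ≤ (1 + y)(1 + t)`. Integrating
with `t = g x` gives `h y ≤ (∫ g) y log (1 + y) + y ∫ g log (1 + g)`, and the linear term is
absorbed using `y ≤ y log (1 + y) + 2`.
-/

open MeasureTheory Real

lemma one_add_mul_log_one_add_sub_nonneg {t : ℝ} (ht : 0 ≤ t) :
    0 ≤ (1 + t) * log (1 + t) - t := by
  have h1t : 0 < 1 + t := by linarith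
  have hlog := one_sub_inv_le_log_of_pos h1t
  have hmul : (1 + t) * (1 - (1 + t)⁻¹) = t := by field_simp; ring
  nlinarith [mul_le_mul_of_nonneg_left hlog h1t.le]

lemma one_add_mul_log_one_add_sub_le {t : ℝ} (ht : -1 < t) :
    (1 + t) * log (1 + t) - t ≤ t * log (1 + t) := by
  have := log_le_sub_one_of_pos (show 0 < 1 + t by linarith)
  linarith

lemma log_one_add_mul_le {a b : ℝ} (ha : 0 ≤ a) (hb : 0 ≤ b) :
    log (1 + a * b) ≤ log (1 + a) + log (1 + b) := by
  rw [← log_mul (by linarith) (by linarith)]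
  exact log_le_log (by positivity) (by nlinarith)

lemma le_mul_log_one_add_add_two {y : ℝ} (hy : 0 ≤ y) : y ≤ y * log (1 + y) + 2 := by
  rcases le_or_gt y 2 with hy2 | hy2
  · nlinarith [mul_nonneg hy (log_nonneg (by linarith : (1 : ℝ) ≤ 1 + y))]
  · have hlog : 1 ≤ log (1 + y) := by
      rw [le_log_iff_exp_le (by linarith)]
      linarith [exp_one_lt_d9]
    nlinarith

lemma one_add_mul_log_one_add_mul_sub_le {y t : ℝ} (hy : 0 ≤ y) (ht : 0 ≤ t) :
    (1 + y * t) * log (1 + y * t) - y * t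
      ≤ log (1 + y) * y * t + y * (t * log (1 + t)) := by
  have hyt : 0 ≤ y * t := mul_nonneg hy ht
  calc (1 + y * t) * log (1 + y * t) - y * t
      ≤ y * t * log (1 + y * t) := one_add_mul_log_one_add_sub_le (by linarith)
    _ ≤ y * t * (log (1 + y) + log (1 + t)) :=
        mul_le_mul_of_nonneg_left (log_one_add_mul_le hy ht) hyt
    _ = log (1 + y) * y * t + y * (t * log (1 + t)) := by ring

theorem integral_one_add_mul_log_one_add_mul_sub_le {α : Type*} [MeasurableSpace α]
    {μ : Measure α} {g : α → ℝ} (hg_nonneg : 0 ≤ᵐ[μ] g) (hg_int : Integrable g μ)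
    (hg_log_int : Integrable (fun x => g x * log (1 + g x)) μ) {y : ℝ} (hy : 0 ≤ y) :
    ∫ x, ((1 + y * g x) * log (1 + y * g x) - y * g x) ∂μ
      ≤ log (1 + y) * y * ∫ x, g x ∂μ + y * ∫ x, g x * log (1 + g x) ∂μ := by
  have hbound : Integrable (fun x => log (1 + y) * y * g x + y * (g x * log (1 + g x))) μ :=
    (hg_int.const_mul _).add (hg_log_int.const_mul _)
  calc ∫ x, ((1 + y * g x) * log (1 + y * g x) - y * g x) ∂μ
      ≤ ∫ x, (log (1 + y) * y * g x + y * (g x * log (1 + g x))) ∂μ := by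
        refine integral_mono_of_nonneg ?_ hbound ?_
        · filter_upwards [hg_nonneg] with x hx
          exact one_add_mul_log_one_add_sub_nonneg (mul_nonneg hy hx)
        · filter_upwards [hg_nonneg] with x hx
          exact one_add_mul_log_one_add_mul_sub_le hy hx
    _ = log (1 + y) * y * ∫ x, g x ∂μ + y * ∫ x, g x * log (1 + g x) ∂μ := by
        rw [integral_add (hg_int.const_mul _) (hg_log_int.const_mul _),
          integral_const_mul, integral_const_mul]

theorem h_bound_general (F : Measure ℝ)
    (g : ℝ → ℝ) (hg_nonneg : ∀ x, 0 ≤ g x)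
    (hg_int : Integrable g F)
    (hg_log_int : Integrable (fun x => g x * Real.log (1 + g x)) F) :
    ∃ γ₁ γ₂ : ℝ, 0 < γ₁ ∧ 0 < γ₂ ∧ ∀ y : ℝ, 0 ≤ y →
      ∫ x, ((1 + y * g x) * Real.log (1 + y * g x) - y * g x) ∂F
        ≤ γ₁ * y * Real.log (1 + y) + γ₂ := by
  set A := ∫ x, g x ∂F
  set B := ∫ x, g x * log (1 + g x) ∂F
  have hA : 0 ≤ A := integral_nonneg hg_nonneg
  have hB : 0 ≤ B := integral_nonneg fun x =>
    mul_nonneg (hg_nonneg x) (log_nonneg (by linarith [hg_nonneg x]))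
  refine ⟨A + B + 1, 2 * B + 1, by linarith, by linarith, fun y hy => ?_⟩
  have hint := integral_one_add_mul_log_one_add_mul_sub_le
    (Filter.Eventually.of_forall hg_nonneg) hg_int hg_log_int hy
  have hlin := le_mul_log_one_add_add_two hy
  have hylog : 0 ≤ y * log (1 + y) := mul_nonneg hy (log_nonneg (by linarith))
  nlinarith [mul_le_mul_of_nonneg_left hlin hB]

theorem h_bound (F : Measure ℝ) [IsFiniteMeasure F]
    (g : ℝ → ℝ) (hg_meas : Measurable g) (hg_nonneg : ∀ x, 0 ≤ g x)
    (hg_int : Integrable g F)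
    (hg_log_int : Integrable (fun x => g x * Real.log (1 + g x)) F) :
    ∃ γ₁ γ₂ : ℝ, 0 < γ₁ ∧ 0 < γ₂ ∧ ∀ y : ℝ, 0 ≤ y →
      ∫ x, ((1 + y * g x) * Real.log (1 + y * g x) - y * g x) ∂F
        ≤ γ₁ * y * Real.log (1 + y) + γ₂ :=
  h_bound_general F g hg_nonneg hg_int hg_log_int
end

section
/- Let f(x) = (1+x)·log(1+x) - x on (-1,∞). If g : (-1,∞) → [0,∞) is any function satisfying (1-λ)·g(x) ≥ 1 + λ·x - (1+x)^λ for all x > -1 and all λ ∈ (0,1), then g(x) ≥ f(x) for all x > -1. -/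
/-! The function `l ↦ 1 + l x - (1 + x) ^ l` vanishes at `l = 1` with derivative
`x - (1 + x) log (1 + x)` there, so dividing the hypothesis by `1 - l` and letting `l → 1⁻`
bounds `g x` below by minus that derivative. -/

open Filter Topology

theorem HasDerivAt.tendsto_div_sub_nhdsLT {f : ℝ → ℝ} {f' a : ℝ} (hf : HasDerivAt f f' a)
    (hfa : f a = 0) : Tendsto (fun t => f t / (a - t)) (𝓝[<] a) (𝓝 (-f')) := by
  have hslope := (hasDerivAt_iff_tendsto_slope.mp hf).neg.mono_left
    (nhdsWithin_mono a fun t (ht : t < a) => ht.ne)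
  refine hslope.congr fun t => ?_
  rw [slope_def_field, hfa, sub_zero, ← div_neg, neg_sub]

theorem hasDerivAt_one_add_mul_sub_rpow {x : ℝ} (hx : 0 < 1 + x) :
    HasDerivAt (fun l : ℝ => 1 + l * x - (1 + x) ^ l) (x - (1 + x) * Real.log (1 + x)) 1 := by
  have hlin : HasDerivAt (fun l : ℝ => 1 + l * x) x 1 := by
    simpa using ((hasDerivAt_id (1 : ℝ)).mul_const x).const_add 1
  have hpow := (Real.hasStrictDerivAt_const_rpow hx 1).hasDerivAt
  rw [Real.rpow_one] at hpow
  exact hlin.sub hpow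

theorem f_minimal (g : ℝ → ℝ)
    (hg : ∀ x : ℝ, x > -1 → ∀ l ∈ Set.Ioo (0 : ℝ) 1,
      (1 - l) * g x ≥ 1 + l * x - (1 + x) ^ l) :
    ∀ x : ℝ, x > -1 → g x ≥ (1 + x) * Real.log (1 + x) - x := by
  intro x hx
  have hlim := (hasDerivAt_one_add_mul_sub_rpow (by linarith : 0 < 1 + x)).tendsto_div_sub_nhdsLT
    (by simp)
  rw [neg_sub] at hlim
  refine le_of_tendsto hlim ?_
  filter_upwards [Ioo_mem_nhdsLT zero_lt_one] with l hl
  rw [div_le_iff₀ (sub_pos.mpr hl.2)]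
  linarith [hg x hx l hl]
end

section
/- Let X be an integrable real random variable, ζ ∈ ℝ with P(X < ζ) > 0 and P(X > ζ) > 0, and let λ(ζ) = (ζ - E[X | X < ζ])/(E[X | X ≥ ζ] - E[X | X < ζ]). Define the measure ϖ_ζ(B) = (1-λ(ζ))·P(X ∈ B | X < ζ) + λ(ζ)·P(X ∈ B | X ≥ ζ) for Borel sets B. Then ϖ_ζ is a probability measure with mean ∫ x ϖ_ζ(dx) = ζ. -/
/-! The conditional means `m₋ = E[X | X < ζ]` and `m₊ = E[X | X ≥ ζ]` are averages of values
on either side of `ζ`, so `m₋ < ζ ≤ m₊` and `λ ∈ [0, 1]`. Hence `ϖ` is a convex combination of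
the two conditional laws, a probability measure whose mean `(1 - λ) m₋ + λ m₊` is `ζ` by the
choice of `λ`. -/

open MeasureTheory ProbabilityTheory

section Mixture

variable {α : Type*} [MeasurableSpace α] {ν₁ ν₂ : Measure α} {t : ℝ}

lemma isProbabilityMeasure_ofReal_smul_add [IsProbabilityMeasure ν₁] [IsProbabilityMeasure ν₂]
    (ht₀ : 0 ≤ t) (ht₁ : t ≤ 1) :
    IsProbabilityMeasure (ENNReal.ofReal (1 - t) • ν₁ + ENNReal.ofReal t • ν₂) := by
  constructor
  simp only [Measure.add_apply, Measure.smul_apply, measure_univ, smul_eq_mul, mul_one]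
  rw [← ENNReal.ofReal_add (by linarith) ht₀, sub_add_cancel, ENNReal.ofReal_one]

lemma integral_ofReal_smul_add {E : Type*} [NormedAddCommGroup E] [NormedSpace ℝ E] {f : α → E}
    (hf₁ : Integrable f ν₁) (hf₂ : Integrable f ν₂) (ht₀ : 0 ≤ t) (ht₁ : t ≤ 1) :
    ∫ x, f x ∂(ENNReal.ofReal (1 - t) • ν₁ + ENNReal.ofReal t • ν₂) =
      (1 - t) • ∫ x, f x ∂ν₁ + t • ∫ x, f x ∂ν₂ := by
  rw [integral_add_measure (hf₁.smul_measure ENNReal.ofReal_ne_top)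
      (hf₂.smul_measure ENNReal.ofReal_ne_top), integral_smul_measure, integral_smul_measure,
    ENNReal.toReal_ofReal (by linarith), ENNReal.toReal_ofReal ht₀]

end Mixture

section Conditional

variable {Ω E : Type*} [MeasurableSpace Ω] [NormedAddCommGroup E] {μ : Measure Ω} {s : Set Ω}

lemma setAverage_eq_div (f : Ω → ℝ) (s : Set Ω) :
    ⨍ ω in s, f ω ∂μ = (∫ ω in s, f ω ∂μ) / μ.real s := by
  rw [setAverage_eq, smul_eq_mul, inv_mul_eq_div]

lemma setAverage_lt_of_forall_lt {f : Ω → ℝ} {c : ℝ} (hμ : μ s ≠ 0) (hμ₁ : μ s ≠ ⊤)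
    (hf : IntegrableOn f s μ) (hlt : ∀ ω ∈ s, f ω < c) : ⨍ ω in s, f ω ∂μ < c := by
  obtain ⟨ω, hω, hle⟩ := exists_setAverage_le hμ hμ₁ hf
  exact hle.trans_lt (hlt ω hω)

lemma le_setAverage_of_forall_le {f : Ω → ℝ} {c : ℝ} (hμ : μ s ≠ 0) (hμ₁ : μ s ≠ ⊤)
    (hf : IntegrableOn f s μ) (hle : ∀ ω ∈ s, c ≤ f ω) : c ≤ ⨍ ω in s, f ω ∂μ := by
  obtain ⟨ω, hω, hle'⟩ := exists_le_setAverage hμ hμ₁ hf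
  exact (hle ω hω).trans hle'

lemma MeasureTheory.Integrable.cond {f : Ω → E} (hf : Integrable f μ) (hs : μ s ≠ 0) :
    Integrable f μ[|s] :=
  hf.restrict.smul_measure (ENNReal.inv_ne_top.2 hs)

variable [MeasurableSpace E] [BorelSpace E] [SecondCountableTopology E] {X : Ω → E}

lemma integrable_id_map_cond (hX : Measurable X) (hXi : Integrable X μ) (hs : μ s ≠ 0) :
    Integrable (fun x ↦ x) ((μ[|s]).map X) :=
  (integrable_map_measure measurable_id'.aestronglyMeasurable hX.aemeasurable).2 (hXi.cond hs)

lemma integral_id_map_cond [NormedSpace ℝ E] (hX : Measurable X) (s : Set Ω) :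
    ∫ x, x ∂(μ[|s]).map X = ⨍ ω in s, X ω ∂μ := by
  rw [integral_map hX.aemeasurable measurable_id'.aestronglyMeasurable]
  exact (setAverage_eq' μ X s).symm

end Conditional

theorem tilted_two_point_measure {Ω : Type*} [MeasurableSpace Ω] (μ : Measure Ω)
    [IsProbabilityMeasure μ] (X : Ω → ℝ) (hX_meas : Measurable X)
    (hX : Integrable X μ) (ζ : ℝ)
    (h₁ : 0 < μ {ω | X ω < ζ}) (h₂ : 0 < μ {ω | ζ < X ω}) :
    let mMinus : ℝ := (∫ ω in {ω | X ω < ζ}, X ω ∂μ) / (μ {ω | X ω < ζ}).toReal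
    let mPlus : ℝ := (∫ ω in {ω | ζ ≤ X ω}, X ω ∂μ) / (μ {ω | ζ ≤ X ω}).toReal
    let lam : ℝ := (ζ - mMinus) / (mPlus - mMinus)
    let ϖ : Measure ℝ :=
      ENNReal.ofReal (1 - lam) • Measure.map X (μ[|{ω | X ω < ζ}]) +
        ENNReal.ofReal lam • Measure.map X (μ[|{ω | ζ ≤ X ω}])
    IsProbabilityMeasure ϖ ∧ ∫ x, x ∂ϖ = ζ := by
  intro mMinus mPlus lam ϖ
  have hA : μ {ω | X ω < ζ} ≠ 0 := h₁.ne'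
  have hB : μ {ω | ζ ≤ X ω} ≠ 0 := (h₂.trans_le (measure_mono fun _ (hω : ζ < _) ↦ hω.le)).ne'
  have hMinus : mMinus = ⨍ ω in {ω | X ω < ζ}, X ω ∂μ := (setAverage_eq_div X _).symm
  have hPlus : mPlus = ⨍ ω in {ω | ζ ≤ X ω}, X ω ∂μ := (setAverage_eq_div X _).symm
  have hlt : mMinus < ζ :=
    hMinus ▸ setAverage_lt_of_forall_lt hA (measure_ne_top _ _) hX.integrableOn fun _ ↦ id
  have hle : ζ ≤ mPlus :=
    hPlus ▸ le_setAverage_of_forall_le hB (measure_ne_top _ _) hX.integrableOn fun _ ↦ id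
  have hgap : 0 < mPlus - mMinus := by linarith
  have hlam₀ : 0 ≤ lam := div_nonneg (by linarith) hgap.le
  have hlam₁ : lam ≤ 1 := (div_le_one hgap).2 (by linarith)
  have := cond_isProbabilityMeasure hA
  have := cond_isProbabilityMeasure hB
  have := Measure.isProbabilityMeasure_map (μ := μ[|{ω | X ω < ζ}]) hX_meas.aemeasurable
  have := Measure.isProbabilityMeasure_map (μ := μ[|{ω | ζ ≤ X ω}]) hX_meas.aemeasurable
  refine ⟨isProbabilityMeasure_ofReal_smul_add hlam₀ hlam₁, ?_⟩
  refine (integral_ofReal_smul_add (integrable_id_map_cond hX_meas hX hA)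
    (integrable_id_map_cond hX_meas hX hB) hlam₀ hlam₁).trans ?_
  rw [integral_id_map_cond hX_meas, integral_id_map_cond hX_meas, ← hMinus, ← hPlus,
    smul_eq_mul, smul_eq_mul]
  have hcancel : lam * (mPlus - mMinus) = ζ - mMinus := div_mul_cancel₀ _ hgap.ne'
  linear_combination hcancel
end

section
/- Let μ be a probability measure on ℝ with μ((-∞,ζ)) > 0 and μ((ζ,∞)) > 0 for a given ζ ∈ ℝ, and with finite first moment. Then there exists a strictly positive bounded density f_ζ : ℝ → (0,∞) taking at most two values, such that ∫ f_ζ dμ = 1 and ∫ x·f_ζ(x) μ(dx) = ζ. -/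
open MeasureTheory

theorem two_value_density_exists (μ : Measure ℝ) [IsProbabilityMeasure μ]
    (hmom : Integrable (fun x : ℝ => x) μ) (ζ : ℝ)
    (h₁ : 0 < μ (Set.Iio ζ)) (h₂ : 0 < μ (Set.Ioi ζ)) :
    ∃ f : ℝ → ℝ, Measurable f ∧ (∀ x, 0 < f x) ∧
      (∃ M : ℝ, ∀ x, f x ≤ M) ∧ (∃ c : ℝ, 0 < c ∧ ∀ x, c ≤ f x) ∧
      (∃ v₁ v₂ : ℝ, ∀ x, f x = v₁ ∨ f x = v₂) ∧
      (∫ x, f x ∂μ) = 1 ∧ (∫ x, x * f x ∂μ) = ζ := by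
  classical
  have hIio : MeasurableSet (Set.Iio ζ) := measurableSet_Iio
  have hIci : MeasurableSet (Set.Ici ζ) := measurableSet_Ici
  set p : ℝ := (μ (Set.Iio ζ)).toReal with hp_def
  set q : ℝ := (μ (Set.Ici ζ)).toReal with hq_def
  have hfin1 : μ (Set.Iio ζ) ≠ ⊤ := measure_ne_top μ _
  have hfin2 : μ (Set.Ici ζ) ≠ ⊤ := measure_ne_top μ _
  have hIciPos : 0 < μ (Set.Ici ζ) := lt_of_lt_of_le h₂ (measure_mono Set.Ioi_subset_Ici_self)
  have hp : 0 < p := ENNReal.toReal_pos h₁.ne' hfin1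
  have hq : 0 < q := ENNReal.toReal_pos hIciPos.ne' hfin2
  have hpq : p + q = 1 := by
    have : μ (Set.Iio ζ) + μ (Set.Ici ζ) = 1 := by
      rw [← Set.compl_Iio, measure_add_measure_compl hIio]
      exact measure_univ
    rw [hp_def, hq_def, ← ENNReal.toReal_add hfin1 hfin2, this]
    simp
  set A : ℝ := ∫ x in Set.Iio ζ, x ∂μ with hA_def
  set B : ℝ := ∫ x in Set.Ici ζ, x ∂μ with hB_def
  -- strict inequality A < ζ * p
  have hintIio : Integrable (fun x : ℝ => x) (μ.restrict (Set.Iio ζ)) := hmom.restrict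
  have hintIci : Integrable (fun x : ℝ => x) (μ.restrict (Set.Ici ζ)) := hmom.restrict
  have hA : A < ζ * p := by
    have hnn : 0 ≤ᵐ[μ.restrict (Set.Iio ζ)] (fun x => ζ - x) := by
      refine (ae_restrict_iff' hIio).2 (ae_of_all _ fun x hx => ?_)
      have : x < ζ := hx
      simp only [Pi.zero_apply]; linarith
    have hint : Integrable (fun x : ℝ => ζ - x) (μ.restrict (Set.Iio ζ)) :=
      (integrable_const ζ).restrict.sub hintIio
    have hsupp : 0 < (μ.restrict (Set.Iio ζ)) (Function.support fun x => ζ - x) := by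
      have hsub : Set.Iio ζ ⊆ Function.support fun x => ζ - x := by
        intro x hx
        have : x < ζ := hx
        simp [Function.support, sub_eq_zero]
        linarith
      have hres : (μ.restrict (Set.Iio ζ)) (Set.Iio ζ) = μ (Set.Iio ζ) := by
        simp [Measure.restrict_apply hIio]
      have h₁' : 0 < (μ.restrict (Set.Iio ζ)) (Set.Iio ζ) := by rw [hres]; exact h₁
      exact lt_of_lt_of_le h₁' (measure_mono hsub)
    have hpos : 0 < ∫ x, (ζ - x) ∂(μ.restrict (Set.Iio ζ)) :=
      (integral_pos_iff_support_of_nonneg_ae hnn hint).2 hsupp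
    have heq : ∫ x, (ζ - x) ∂(μ.restrict (Set.Iio ζ)) = ζ * p - A := by
      rw [integral_sub (integrable_const ζ).restrict hintIio]
      simp [hA_def, hp_def, mul_comm]
      exact Or.inl rfl
    linarith [heq ▸ hpos]
  have hB : ζ * q < B := by
    have hnn : 0 ≤ᵐ[μ.restrict (Set.Ici ζ)] (fun x => x - ζ) := by
      refine (ae_restrict_iff' hIci).2 (ae_of_all _ fun x hx => ?_)
      have : ζ ≤ x := hx
      simp only [Pi.zero_apply]; linarith
    have hint : Integrable (fun x : ℝ => x - ζ) (μ.restrict (Set.Ici ζ)) :=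
      hintIci.sub (integrable_const ζ).restrict
    have hsupp : 0 < (μ.restrict (Set.Ici ζ)) (Function.support fun x => x - ζ) := by
      have hsub : Set.Ioi ζ ⊆ Function.support fun x => x - ζ := by
        intro x hx
        have : ζ < x := hx
        simp [Function.support, sub_eq_zero]
        linarith
      have hres : (μ.restrict (Set.Ici ζ)) (Set.Ioi ζ) = μ (Set.Ioi ζ) := by
        rw [Measure.restrict_apply measurableSet_Ioi,
          Set.inter_eq_left.2 Set.Ioi_subset_Ici_self]
      exact lt_of_lt_of_le (hres ▸ h₂) (measure_mono hsub)
    have hpos : 0 < ∫ x, (x - ζ) ∂(μ.restrict (Set.Ici ζ)) :=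
      (integral_pos_iff_support_of_nonneg_ae hnn hint).2 hsupp
    have heq : ∫ x, (x - ζ) ∂(μ.restrict (Set.Ici ζ)) = B - ζ * q := by
      rw [integral_sub hintIci (integrable_const ζ).restrict]
      simp [hB_def, hq_def, mul_comm]
      exact Or.inl rfl
    linarith [heq ▸ hpos]
  set D : ℝ := p * B - q * A with hD_def
  have hD : 0 < D := by nlinarith
  set a : ℝ := (B - ζ * q) / D with ha_def
  set b : ℝ := (ζ * p - A) / D with hb_def
  have ha : 0 < a := div_pos (by linarith) hD
  have hb : 0 < b := div_pos (by linarith) hD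
  refine ⟨fun x => if x < ζ then a else b, ?_, ?_, ?_, ?_, ?_, ?_, ?_⟩
  · exact Measurable.ite hIio measurable_const measurable_const
  · intro x; dsimp only; split <;> [exact ha; exact hb]
  · exact ⟨max a b, fun x => by dsimp only; split <;> [exact le_max_left a b; exact le_max_right a b]⟩
  · exact ⟨min a b, lt_min ha hb, fun x => by dsimp only; split <;> [exact min_le_left a b; exact min_le_right a b]⟩
  · exact ⟨a, b, fun x => by dsimp only; split <;> [exact Or.inl rfl; exact Or.inr rfl]⟩
  · have hrw : (fun x : ℝ => if x < ζ then a else b)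
        = fun x => (Set.Iio ζ).indicator (fun _ => a) x + (Set.Ici ζ).indicator (fun _ => b) x := by
      funext x
      by_cases h : x < ζ
      · simp [Set.indicator, h, Set.mem_Iio, Set.mem_Ici, not_le.2 h]
      · simp [Set.indicator, h, Set.mem_Iio, Set.mem_Ici, not_lt.1 h]
    rw [hrw, integral_add ((integrable_const a).indicator hIio) ((integrable_const b).indicator hIci),
      integral_indicator hIio, integral_indicator hIci, setIntegral_const, setIntegral_const]
    show p * a + q * b = 1
    rw [ha_def, hb_def]
    field_simp
    linear_combination -hD_def
  · have hrw : (fun x : ℝ => x * (if x < ζ then a else b))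
        = fun x => (Set.Iio ζ).indicator (fun y => y * a) x + (Set.Ici ζ).indicator (fun y => y * b) x := by
      funext x
      by_cases h : x < ζ
      · simp [Set.indicator, h, Set.mem_Iio, Set.mem_Ici, not_le.2 h]
      · simp [Set.indicator, h, Set.mem_Iio, Set.mem_Ici, not_lt.1 h]
    have hia : Integrable (fun y : ℝ => y * a) μ := hmom.mul_const a
    have hib : Integrable (fun y : ℝ => y * b) μ := hmom.mul_const b
    rw [hrw, integral_add (hia.indicator hIio) (hib.indicator hIci),
      integral_indicator hIio, integral_indicator hIci,
      integral_mul_const, integral_mul_const]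
    show A * a + B * b = ζ
    rw [ha_def, hb_def]
    field_simp
    linear_combination (-ζ) * hD_def
end

section
/- Let F be a finite measure on ℝ with F({0}) = 0, supported in [-a, a]^c for some a > 0 (i.e., F = F(· ∩ [-a,a]^c)), with F(ℝ) > 0 and ∫ |x| dF < ∞, and suppose F((-∞,ζ)) > 0 and F((ζ,∞)) > 0 for a given ζ ∈ ℝ. Then there exists a measurable strictly positive function α : ℝ → (0, ∞) with α(x) = 1 for |x| ≤ a such that ∫_{[-a,a]^c} α(x) F(dx) = F(ℝ) and ∫_{[-a,a]^c} x·α(x) F(dx) = ζ·F(ℝ). -/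
/-!
Tilt `F` by a density taking one value `p` on `(-∞, ζ)` and another value `q` on `[ζ, ∞)`.
The two moment conditions become the linear system
`p μ₁ + q μ₂ = m`, `p I₁ + q I₂ = ζ m` in the masses `μ₁, μ₂` and first moments `I₁, I₂` of the
two half-lines. Since `F` charges both sides of `ζ`, we have `I₁ < ζ μ₁` and `ζ μ₂ < I₂`, so
`ζ` lies strictly between the two conditional means and the system has a positive solution.
-/

open MeasureTheory Set

lemma exists_pos_two_point_weights {μ₁ μ₂ I₁ I₂ ζ m : ℝ} (hμ₁ : 0 < μ₁) (hμ₂ : 0 ≤ μ₂)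
    (hI₁ : I₁ < ζ * μ₁) (hI₂ : ζ * μ₂ < I₂) (hm : 0 < m) :
    ∃ p q : ℝ, 0 < p ∧ 0 < q ∧ p * μ₁ + q * μ₂ = m ∧ p * I₁ + q * I₂ = ζ * m := by
  have hp : 0 < I₂ - ζ * μ₂ := sub_pos.2 hI₂
  have hq : 0 < ζ * μ₁ - I₁ := sub_pos.2 hI₁
  have hD : 0 < (I₂ - ζ * μ₂) * μ₁ + (ζ * μ₁ - I₁) * μ₂ :=
    add_pos_of_pos_of_nonneg (mul_pos hp hμ₁) (mul_nonneg hq.le hμ₂)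
  refine ⟨m * (I₂ - ζ * μ₂) / ((I₂ - ζ * μ₂) * μ₁ + (ζ * μ₁ - I₁) * μ₂),
    m * (ζ * μ₁ - I₁) / ((I₂ - ζ * μ₂) * μ₁ + (ζ * μ₁ - I₁) * μ₂),
    div_pos (mul_pos hm hp) hD, div_pos (mul_pos hm hq) hD, ?_, ?_⟩
  · field_simp
  · field_simp
    ring

noncomputable def stepDensity (ζ p q : ℝ) (x : ℝ) : ℝ := if x < ζ then p else q

section StepDensity

variable {μ : Measure ℝ} {ζ p q : ℝ}

lemma measurable_stepDensity : Measurable (stepDensity ζ p q) :=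
  Measurable.ite measurableSet_Iio measurable_const measurable_const

lemma stepDensity_pos (hp : 0 < p) (hq : 0 < q) (x : ℝ) : 0 < stepDensity ζ p q x := by
  unfold stepDensity
  split_ifs <;> assumption

lemma integral_mul_stepDensity {f : ℝ → ℝ} (hf : Integrable f μ) :
    ∫ x, f x * stepDensity ζ p q x ∂μ =
      p * ∫ x in Iio ζ, f x ∂μ + q * ∫ x in Ici ζ, f x ∂μ := by
  have hsplit : (fun x => f x * stepDensity ζ p q x) =
      (Iio ζ).piecewise (fun x => f x * p) (fun x => f x * q) := by
    ext x
    by_cases hx : x < ζ <;> simp [stepDensity, piecewise, hx]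
  rw [hsplit, integral_piecewise measurableSet_Iio (hf.mul_const p).integrableOn
    (hf.mul_const q).integrableOn, compl_Iio, integral_mul_const, integral_mul_const,
    mul_comm p, mul_comm q]

lemma integral_stepDensity [IsFiniteMeasure μ] :
    ∫ x, stepDensity ζ p q x ∂μ = p * μ.real (Iio ζ) + q * μ.real (Ici ζ) := by
  simpa using integral_mul_stepDensity (ζ := ζ) (p := p) (q := q) (integrable_const (1 : ℝ))

end StepDensity

section HalfLineMoments

variable {μ : Measure ℝ} [IsFiniteMeasure μ] {ζ : ℝ}

lemma setIntegral_Iio_id_lt (hid : Integrable (fun x : ℝ => x) μ) (h : 0 < μ (Iio ζ)) :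
    ∫ x in Iio ζ, x ∂μ < ζ * μ.real (Iio ζ) := by
  have hpos : 0 < ∫ x in Iio ζ, (ζ - x) ∂μ := by
    rw [setIntegral_pos_iff_support_of_nonneg_ae]
    · refine h.trans_le (measure_mono fun x hx => ⟨(sub_pos.2 hx).ne', hx⟩)
    · filter_upwards [ae_restrict_mem measurableSet_Iio] with x hx
      exact sub_nonneg.2 hx.le
    · exact ((integrable_const ζ).sub hid).integrableOn
  rw [integral_sub (integrable_const ζ) hid.integrableOn, setIntegral_const, smul_eq_mul] at hpos
  linarith

lemma lt_setIntegral_Ici_id (hid : Integrable (fun x : ℝ => x) μ) (h : 0 < μ (Ioi ζ)) :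
    ζ * μ.real (Ici ζ) < ∫ x in Ici ζ, x ∂μ := by
  have hpos : 0 < ∫ x in Ici ζ, (x - ζ) ∂μ := by
    rw [setIntegral_pos_iff_support_of_nonneg_ae]
    · exact h.trans_le (measure_mono fun x hx => ⟨(sub_pos.2 hx).ne', Ioi_subset_Ici_self hx⟩)
    · filter_upwards [ae_restrict_mem measurableSet_Ici] with x hx
      exact sub_nonneg.2 hx
    · exact (hid.sub (integrable_const ζ)).integrableOn
  rw [integral_sub hid.integrableOn (integrable_const ζ), setIntegral_const, smul_eq_mul] at hpos
  linarith

theorem exists_stepDensity_moments_eq (hid : Integrable (fun x : ℝ => x) μ) (h₁ : 0 < μ (Iio ζ))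
    (h₂ : 0 < μ (Ioi ζ)) {m : ℝ} (hm : 0 < m) :
    ∃ p q : ℝ, 0 < p ∧ 0 < q ∧ ∫ x, stepDensity ζ p q x ∂μ = m ∧
      ∫ x, x * stepDensity ζ p q x ∂μ = ζ * m := by
  obtain ⟨p, q, hp, hq, hmass, hmean⟩ := exists_pos_two_point_weights
    (measureReal_def μ _ ▸ ENNReal.toReal_pos h₁.ne' (measure_ne_top μ _))
    measureReal_nonneg (setIntegral_Iio_id_lt hid h₁) (lt_setIntegral_Ici_id hid h₂) hm
  exact ⟨p, q, hp, hq, integral_stepDensity.trans hmass,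
    (integral_mul_stepDensity hid).trans hmean⟩

end HalfLineMoments

theorem tilting_density_exists_general (F : Measure ℝ) [IsFiniteMeasure F]
    (a : ℝ) (hsupp : F (Set.Icc (-a) a) = 0)
    (hpos : 0 < F Set.univ)
    (hmom : Integrable (fun x : ℝ => |x|) F) (ζ : ℝ)
    (h₁ : 0 < F (Set.Iio ζ)) (h₂ : 0 < F (Set.Ioi ζ)) :
    ∃ α : ℝ → ℝ, Measurable α ∧ (∀ x, 0 < α x) ∧
      (∀ x : ℝ, |x| ≤ a → α x = 1) ∧
      (∫ x in {x : ℝ | a < |x|}, α x ∂F) = (F Set.univ).toReal ∧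
      (∫ x in {x : ℝ | a < |x|}, x * α x ∂F) = ζ * (F Set.univ).toReal := by
  have hid : Integrable (fun x : ℝ => x) F :=
    hmom.mono' measurable_id.aestronglyMeasurable (ae_of_all _ fun x => (Real.norm_eq_abs x).le)
  obtain ⟨p, q, hp, hq, hmass, hmean⟩ := exists_stepDensity_moments_eq hid h₁ h₂
    (ENNReal.toReal_pos hpos.ne' (measure_ne_top F _))
  set s := {x : ℝ | a < |x|}
  have hs : MeasurableSet s := measurableSet_lt measurable_const measurable_abs
  have hFs : F.restrict s = F := by
    refine Measure.restrict_eq_self_of_ae_mem (mem_ae_iff.2 ?_)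
    convert hsupp
    ext x
    simp [s, abs_le]
  have hα : EqOn (fun x => if |x| ≤ a then 1 else stepDensity ζ p q x) (stepDensity ζ p q) s :=
    fun x hx => if_neg (not_le.2 hx)
  refine ⟨fun x => if |x| ≤ a then 1 else stepDensity ζ p q x,
    Measurable.ite (measurableSet_le measurable_abs measurable_const) measurable_const
      measurable_stepDensity, fun x => ?_, fun x hx => if_pos hx, ?_, ?_⟩
  · dsimp only
    split_ifs
    exacts [one_pos, stepDensity_pos hp hq x]
  · rw [setIntegral_congr_fun hs hα, hFs, hmass]
  · rw [setIntegral_congr_fun hs fun x hx => congrArg (x * ·) (hα hx), hFs, hmean]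

theorem tilting_density_exists (F : Measure ℝ) [IsFiniteMeasure F]
    (a : ℝ) (ha : 0 < a) (hsupp : F (Set.Icc (-a) a) = 0)
    (hpos : 0 < F Set.univ)
    (hmom : Integrable (fun x : ℝ => |x|) F) (ζ : ℝ)
    (h₁ : 0 < F (Set.Iio ζ)) (h₂ : 0 < F (Set.Ioi ζ)) :
    ∃ α : ℝ → ℝ, Measurable α ∧ (∀ x, 0 < α x) ∧
      (∀ x : ℝ, |x| ≤ a → α x = 1) ∧
      (∫ x in {x : ℝ | a < |x|}, α x ∂F) = (F Set.univ).toReal ∧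
      (∫ x in {x : ℝ | a < |x|}, x * α x ∂F) = ζ * (F Set.univ).toReal :=
  tilting_density_exists_general F a hsupp hpos hmom ζ h₁ h₂
end
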